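/- Let X be a connected and locally arcwise connected metric space and let A, B, C ⊆ X be closed and nonempty sets with A ∩ B = ∅. Then C cuts the arcs between A and B if and only if there exists a continuous function f : X → ℝ such that f(x) ≤ 0 for all x ∈ S(A), f(x) ≥ 0 for all x ∈ S(B), and C = {x ∈ X : f(x) = 0}. -/

import Mathlib

/-!
If such an `f` exists, a path meeting `A ⊆ S(A)` and `B ⊆ S(B)` has a zero of `f` on it by the
intermediate value theorem. Conversely, take for `f` the distance to `C`, negated on the path
components of `X \ C` that meet `S(A)`. Since these components are open, `f` is continuous, and
it is nonnegative on `S(B)` because every path from `S(A)` to `S(B)` crosses `C`.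
-/

/-- `C` cuts the arcs between `A` and `B` in the space `X`: every path in `X`
whose range meets both `A` and `B` has range meeting `C`. -/
def CutsArcs {X : Type*} [TopologicalSpace X] (A B C : Set X) : Prop :=
  ∀ γ : C(unitInterval, X),
    (Set.range γ ∩ A).Nonempty → (Set.range γ ∩ B).Nonempty →
    (Set.range γ ∩ C).Nonempty

/-- The side of `A` in `X` (relative to `B`): the set of points `x` such that every
path starting at `x` and ending in `B` has range meeting `A`. -/
def sideOf {X : Type*} [TopologicalSpace X] (A B : Set X) : Set X :=
  {x : X | ∀ γ : C(unitInterval, X), γ 0 = x → γ 1 ∈ B →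
    (Set.range γ ∩ A).Nonempty}

open Set Metric

section Paths

variable {X : Type*} [TopologicalSpace X] {A B C : Set X} {x y : X}

lemma subset_sideOf : A ⊆ sideOf A B :=
  fun _ ha γ hγ _ ↦ ⟨γ 0, mem_range_self 0, hγ ▸ ha⟩

lemma cutsArcs_setOf_eq_zero {f : X → ℝ} (hf : Continuous f) (hA : ∀ x ∈ A, f x ≤ 0)
    (hB : ∀ x ∈ B, 0 ≤ f x) : CutsArcs A B {x | f x = 0} := by
  rintro γ ⟨_, ⟨ta, rfl⟩, hta⟩ ⟨_, ⟨tb, rfl⟩, htb⟩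
  obtain ⟨t, -, ht⟩ := isPreconnected_univ.intermediate_value (mem_univ ta) (mem_univ tb)
    (hf.comp γ.continuous).continuousOn ⟨hA _ hta, hB _ htb⟩
  exact ⟨γ t, mem_range_self t, ht⟩

/-- A point on the side of `B` can be joined to `B` by a path avoiding `A`: follow any path
to `A` up to its first visit of `A ∪ B`, which cannot lie in `A`. -/
lemma exists_path_not_mem_of_mem_sideOf [PathConnectedSpace X] (hA : IsClosed A)
    (hB : IsClosed B) (hAne : A.Nonempty) (hAB : Disjoint A B) (hy : y ∈ sideOf B A) :
    ∃ z ∈ B, ∃ q : Path y z, ∀ t, q t ∉ A := by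
  obtain ⟨a, ha⟩ := hAne
  let q := PathConnectedSpace.somePath y a
  obtain ⟨t₀, ht₀, hfirst⟩ := ((hA.union hB).preimage q.continuous).isCompact.exists_isLeast
    (⟨1, by simp [ha]⟩ : {t | q t ∈ A ∪ B}.Nonempty)
  let δ := q.subpath 0 t₀
  have hδ : ∀ z ∈ range δ, z ∈ A ∪ B → z = q t₀ := by
    rintro _ hz hzAB
    rw [Path.range_subpath_of_le _ _ _ unitInterval.nonneg'] at hz
    obtain ⟨s, hs, rfl⟩ := hz
    rw [le_antisymm hs.2 (hfirst hzAB)]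
  have hBt₀ : q t₀ ∈ B := by
    refine ht₀.resolve_left fun hAt₀ ↦ ?_
    obtain ⟨z, hz, hzB⟩ := hy δ.toContinuousMap (by simp [δ]) (by simpa [δ] using hAt₀)
    exact hAB.notMem_of_mem_left hAt₀ (hδ z hz (Or.inr hzB) ▸ hzB)
  refine ⟨q t₀, hBt₀, δ.cast (by simp) rfl, fun t hAt ↦ ?_⟩
  have hz := hδ (δ t) (mem_range_self t) (Or.inl hAt)
  exact hAB.notMem_of_mem_left (by simpa [hz] using hAt) hBt₀

/-- The path, continued to `B` while avoiding `A`, meets `A`; going back from that point of `A`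
to `y` it meets `B`. -/
lemma CutsArcs.range_inter_nonempty_of_mem_sideOf [PathConnectedSpace X] (hA : IsClosed A)
    (hB : IsClosed B) (hAne : A.Nonempty) (hAB : Disjoint A B) (hcut : CutsArcs A B C)
    (hx : x ∈ sideOf A B) (hy : y ∈ sideOf B A) (p : Path x y) : (range p ∩ C).Nonempty := by
  obtain ⟨z, hzB, q, hqA⟩ := exists_path_not_mem_of_mem_sideOf hA hB hAne hAB hy
  obtain ⟨w, hpq, hA'⟩ := hx (p.trans q).toContinuousMap (by simp) (by simpa using hzB)
  obtain ⟨s, rfl⟩ : w ∈ range p := by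
    rw [Path.coe_toContinuousMap, Path.trans_range] at hpq
    exact hpq.resolve_right fun ⟨t, ht⟩ ↦ hqA t (ht ▸ hA')
  obtain ⟨w, hw, hwB⟩ := hy (p.subpath 1 s).toContinuousMap (by simp) (by simpa using hA')
  refine hcut p.toContinuousMap ⟨p s, by simp, hA'⟩ ⟨w, ?_, hwB⟩
  simpa using (Path.range_subpath p 1 s).subset hw |> image_subset_range _ _

end Paths

lemma frontier_biUnion_pathComponentIn_subset_compl {X : Type*} [TopologicalSpace X]
    [LocallyPathConnectedSpace X] {O : Set X} (hO : IsOpen O) (S : Set X) :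
    frontier (⋃ w ∈ S, pathComponentIn O w) ⊆ Oᶜ := by
  have hopen : IsOpen (⋃ w ∈ S, pathComponentIn O w) :=
    isOpen_biUnion fun w _ ↦ hO.pathComponentIn w
  rw [hopen.frontier_eq]
  rintro z ⟨hzcl, hzU⟩ hzO
  obtain ⟨u, hzu, hu⟩ := mem_closure_iff.mp hzcl _ (hO.pathComponentIn z)
    (mem_pathComponentIn_self hzO)
  obtain ⟨w, hw, hwu⟩ := mem_iUnion₂.mp hu
  exact hzU (mem_biUnion hw (hwu.trans (JoinedIn.symm hzu)))

lemma exists_continuous_nonpos_nonneg_of_frontier_subset {X : Type*} [PseudoMetricSpace X]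
    {U C : Set X} (hC : IsClosed C) (hCne : C.Nonempty) (hU : frontier U ⊆ C) :
    ∃ f : X → ℝ, Continuous f ∧ (∀ x ∈ U, f x ≤ 0) ∧ (∀ x ∉ U, 0 ≤ f x) ∧
      C = {x | f x = 0} := by
  classical
  refine ⟨fun x ↦ if x ∈ U then -infDist x C else infDist x C, ?_, fun x hx ↦ ?_,
    fun x hx ↦ ?_, ?_⟩
  · refine (continuous_infDist_pt C).neg.if (fun x hx ↦ ?_) (continuous_infDist_pt C)
    simp [infDist_zero_of_mem (hU hx)]
  · simp [hx, infDist_nonneg]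
  · simp [hx, infDist_nonneg]
  · ext x
    by_cases hx : x ∈ U <;> simp [hx, hC.mem_iff_infDist_zero hCne]

theorem stmt3_general {X : Type*} [MetricSpace X] [ConnectedSpace X] [LocallyPathConnectedSpace X]
    (A B C : Set X) (hA : IsClosed A) (hB : IsClosed B) (hC : IsClosed C)
    (hAne : A.Nonempty) (hCne : C.Nonempty)
    (hAB : A ∩ B = ∅) :
    CutsArcs A B C ↔
      ∃ f : X → ℝ, Continuous f ∧ (∀ x ∈ sideOf A B, f x ≤ 0) ∧
        (∀ x ∈ sideOf B A, 0 ≤ f x) ∧ C = {x : X | f x = 0} := by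
  have := pathConnectedSpace_iff_connectedSpace.mpr ‹ConnectedSpace X›
  constructor
  · intro hcut
    obtain ⟨f, hf, hfU, hfUc, hfC⟩ := exists_continuous_nonpos_nonneg_of_frontier_subset hC hCne
      (frontier_biUnion_pathComponentIn_subset_compl (O := Cᶜ) hC.isOpen_compl (sideOf A B)
        |>.trans (compl_compl C).subset)
    refine ⟨f, hf, fun x hx ↦ ?_, fun y hy ↦ hfUc y ?_, hfC⟩
    · by_cases hxC : x ∈ C
      · exact le_of_eq (hfC.subset hxC)
      · exact hfU x (mem_biUnion hx (mem_pathComponentIn_self hxC))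
    · intro hyU
      obtain ⟨x, hx, p, hp⟩ := mem_iUnion₂.mp hyU
      obtain ⟨_, ⟨t, rfl⟩, hC'⟩ := hcut.range_inter_nonempty_of_mem_sideOf hA hB hAne
        (disjoint_iff_inter_eq_empty.mpr hAB) hx hy p
      exact hp t hC'
  · rintro ⟨f, hf, hfA, hfB, rfl⟩
    exact cutsArcs_setOf_eq_zero hf (fun x hx ↦ hfA x (subset_sideOf hx))
      fun x hx ↦ hfB x (subset_sideOf hx)

theorem stmt3 {X : Type*} [MetricSpace X] [ConnectedSpace X] [LocallyPathConnectedSpace X]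
    (A B C : Set X) (hA : IsClosed A) (hB : IsClosed B) (hC : IsClosed C)
    (hAne : A.Nonempty) (hBne : B.Nonempty) (hCne : C.Nonempty)
    (hAB : A ∩ B = ∅) :
    CutsArcs A B C ↔
      ∃ f : X → ℝ, Continuous f ∧ (∀ x ∈ sideOf A B, f x ≤ 0) ∧
        (∀ x ∈ sideOf B A, 0 ≤ f x) ∧ C = {x : X | f x = 0} :=
  stmt3_general A B C hA hB hC hAne hCne hAB
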